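/- Let d ≥ 1 and let ω ⊆ ℝᵈ be a bounded open set with ω nonempty, and set S = frontier ω. Assume the Lebesgue measure of S is zero. Define the signed distance function φ : ℝᵈ → ℝ by φ(x) = −(Metric.infDist x S) if x ∈ ω and φ(x) = Metric.infDist x S otherwise. Then for Lebesgue-almost every x ∈ ℝᵈ, φ is differentiable at x and ‖fderiv ℝ φ x‖ = 1. -/

import Mathlib

/-!
Off the null set `S = ∂ω`, the function `φ` agrees near each point with `±dist(·, S)`. The
distance to `S` is `1`-Lipschitz, so by Rademacher's theorem it is differentiable almost
everywhere with gradient of norm at most `1`; and at a point outside `S` it decreases at unit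
rate along the segment towards a nearest point of `S`, which forces the norm to be exactly `1`.
-/

open MeasureTheory Filter Topology

theorem HasFDerivAt.apply_le_of_eventually_le_sub {E : Type*} [NormedAddCommGroup E]
    [NormedSpace ℝ E] {f : E → ℝ} {f' : E →L[ℝ] ℝ} {x v : E} {c : ℝ} (hf : HasFDerivAt f f' x)
    (h : ∀ᶠ t in 𝓝[>] (0 : ℝ), f (x + t • v) ≤ f x - t * c) :
    f' v ≤ -c := by
  refine le_of_tendsto (hf.lim_real v) ?_
  filter_upwards [tendsto_inv_atTop_nhdsGT_zero.eventually h, eventually_gt_atTop 0]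
    with s hs hs_pos
  calc s • (f (x + s⁻¹ • v) - f x) ≤ s * -(s⁻¹ * c) := by
        rw [smul_eq_mul]; gcongr; linarith
    _ = -c := by field_simp

theorem Metric.infDist_add_smul_sub_le {E : Type*} [NormedAddCommGroup E] [NormedSpace ℝ E]
    {S : Set E} {x y : E} (hy : y ∈ closure S) {t : ℝ} (ht : t ≤ 1) :
    infDist (x + t • (y - x)) S ≤ (1 - t) * dist x y := by
  calc infDist (x + t • (y - x)) S ≤ dist (x + t • (y - x)) y := by
        rw [← infDist_closure]; exact infDist_le_dist_of_mem hy
    _ = ‖(1 - t) • (y - x)‖ := by rw [dist_eq_norm, ← norm_neg]; congr 1; module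
    _ = (1 - t) * dist x y := by
        rw [norm_smul, Real.norm_of_nonneg (by linarith), dist_eq_norm']

theorem Metric.norm_fderiv_infDist_eq_one {E : Type*} [NormedAddCommGroup E] [NormedSpace ℝ E]
    [ProperSpace E] {S : Set E} (hS : S.Nonempty) {x : E} (hx : x ∉ closure S)
    (hdiff : DifferentiableAt ℝ (infDist · S) x) :
    ‖fderiv ℝ (infDist · S) x‖ = 1 := by
  set L := fderiv ℝ (infDist · S) x
  have hL := hdiff.hasFDerivAt
  have hL_le : ‖L‖ ≤ 1 := by simpa using hL.le_of_lipschitz (lipschitz_infDist_pt S)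
  obtain ⟨y, hy, hxy⟩ := exists_mem_closure_infDist_eq_dist hS x
  have hy_pos : 0 < ‖y - x‖ := norm_pos_iff.2 (sub_ne_zero.2 (ne_of_mem_of_not_mem hy hx))
  have h_descent : L (y - x) ≤ -‖y - x‖ := by
    refine hL.apply_le_of_eventually_le_sub ?_
    filter_upwards [Ioo_mem_nhdsGT one_pos] with t ht
    rw [hxy, ← dist_eq_norm']
    linarith [infDist_add_smul_sub_le (x := x) hy ht.2.le]
  have hL_ge : 1 ≤ ‖L‖ := by
    refine le_of_mul_le_mul_right ?_ hy_pos
    calc 1 * ‖y - x‖ ≤ |L (y - x)| := by rw [one_mul]; exact (neg_le_abs _).trans' (by linarith)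
      _ ≤ ‖L‖ * ‖y - x‖ := L.le_opNorm _
  exact le_antisymm hL_le hL_ge

theorem Bornology.IsBounded.nonempty_frontier {E : Type*} [NormedAddCommGroup E]
    [NormedSpace ℝ E] [Nontrivial E] {s : Set E} (hs : Bornology.IsBounded s)
    (hne : s.Nonempty) : (frontier s).Nonempty :=
  nonempty_frontier_iff.2 ⟨hne, fun h => NormedSpace.unbounded_univ ℝ E (h ▸ hs)⟩

theorem eventuallyEq_or_eventuallyEq_neg_of_notMem_frontier {X R : Type*} [TopologicalSpace X]
    [Neg R] {s : Set X} {φ f : X → R} (hin : ∀ x ∈ s, φ x = -f x) (hout : ∀ x ∉ s, φ x = f x)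
    {x : X} (hx : x ∉ frontier s) : φ =ᶠ[𝓝 x] f ∨ φ =ᶠ[𝓝 x] -f := by
  by_cases hcl : x ∈ closure s
  · have hs : s ∈ 𝓝 x := mem_interior_iff_mem_nhds.1 (by_contra fun h => hx ⟨hcl, h⟩)
    exact Or.inr (eventually_of_mem hs hin)
  · have hs : sᶜ ∈ 𝓝 x := mem_interior_iff_mem_nhds.1 (interior_compl (s := s) ▸ hcl)
    exact Or.inl (eventually_of_mem hs hout)

theorem DifferentiableAt.congr_eventuallyEq_or_neg {𝕜 E F : Type*} [NontriviallyNormedField 𝕜]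
    [NormedAddCommGroup E] [NormedSpace 𝕜 E] [NormedAddCommGroup F] [NormedSpace 𝕜 F]
    {f g : E → F} {x : E} (hf : DifferentiableAt 𝕜 f x) (h : g =ᶠ[𝓝 x] f ∨ g =ᶠ[𝓝 x] -f) :
    DifferentiableAt 𝕜 g x ∧ ‖fderiv 𝕜 g x‖ = ‖fderiv 𝕜 f x‖ := by
  rcases h with h | h
  · exact ⟨hf.congr_of_eventuallyEq h, by rw [h.fderiv_eq]⟩
  · exact ⟨hf.neg.congr_of_eventuallyEq h, by rw [h.fderiv_eq, fderiv_neg, norm_neg]⟩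

theorem signedDist_ae_differentiable_eikonal_general
    (d : ℕ) (hd : 1 ≤ d)
    (ω : Set (EuclideanSpace ℝ (Fin d))) (hne : ω.Nonempty)
    (hbd : Bornology.IsBounded ω)
    (hS : volume (frontier ω) = 0)
    (φ : EuclideanSpace ℝ (Fin d) → ℝ)
    (hφin : ∀ x ∈ ω, φ x = -(Metric.infDist x (frontier ω)))
    (hφout : ∀ x ∉ ω, φ x = Metric.infDist x (frontier ω)) :
    ∀ᵐ x : EuclideanSpace ℝ (Fin d) ∂volume,
      DifferentiableAt ℝ φ x ∧ ‖fderiv ℝ φ x‖ = 1 := by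
  have : Nonempty (Fin d) := ⟨⟨0, hd⟩⟩
  have hS_ne : (frontier ω).Nonempty := hbd.nonempty_frontier hne
  filter_upwards [(Metric.lipschitz_infDist_pt (frontier ω)).ae_differentiableAt,
    measure_eq_zero_iff_ae_notMem.1 hS] with x hdiff hx
  have hx_cl : x ∉ closure (frontier ω) := by rwa [isClosed_frontier.closure_eq]
  obtain ⟨hφ_diff, hφ_norm⟩ := hdiff.congr_eventuallyEq_or_neg
    (eventuallyEq_or_eventuallyEq_neg_of_notMem_frontier hφin hφout hx)
  exact ⟨hφ_diff, hφ_norm.trans (Metric.norm_fderiv_infDist_eq_one hS_ne hx_cl hdiff)⟩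

/-- The signed distance function to the boundary of a bounded nonempty open set whose
boundary has Lebesgue measure zero is differentiable almost everywhere and solves the
eikonal equation `‖∇φ‖ = 1` almost everywhere. -/
theorem signedDist_ae_differentiable_eikonal
    (d : ℕ) (hd : 1 ≤ d)
    (ω : Set (EuclideanSpace ℝ (Fin d))) (hω : IsOpen ω) (hne : ω.Nonempty)
    (hbd : Bornology.IsBounded ω)
    (hS : volume (frontier ω) = 0)
    (φ : EuclideanSpace ℝ (Fin d) → ℝ)
    (hφin : ∀ x ∈ ω, φ x = -(Metric.infDist x (frontier ω)))
    (hφout : ∀ x ∉ ω, φ x = Metric.infDist x (frontier ω)) :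
    ∀ᵐ x : EuclideanSpace ℝ (Fin d) ∂volume,
      DifferentiableAt ℝ φ x ∧ ‖fderiv ℝ φ x‖ = 1 :=
  signedDist_ae_differentiable_eikonal_general d hd ω hne hbd hS φ hφin hφout
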